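/- Let X be a Banach space and U ⊆ X* an open convex set. Then Ũ = Int_{‖·‖}( ⋃_{n ∈ ℕ} weak*-closure(U ∩ n·B_{X*}) ), i.e., the envelope Ũ equals the norm-interior of the set of weak* limits of bounded nets from U. -/

import Mathlib

/-!
A `U`-bounded set `B` keeps distance `c > 0` from `X* \ U`, so every translate of `B` by a vector
of norm `< c` is a bounded subset of `U`; as translations are weak*-continuous, the ball of radius
`c` around a point of `wscl B` lies in `U⁽¹⁾`. Conversely, if `x` is a norm-interior point of
`U⁽¹⁾` and `y ∈ U`, then for small `t > 0` the point `x' = x + t • (x - y)` is still in `U⁽¹⁾`, and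
`x` is the convex combination `(1 - s) • x' + s • y` with `s = t / (1 + t)`. The homothety
`z ↦ (1 - s) • z + s • y` is weak*-continuous and, by convexity, maps a bounded subset of `U` onto
a set that stays `s * r` away from `X* \ U` whenever `ball y r ⊆ U`.
-/

open Metric NormedSpace Pointwise

variable {X : Type*} [NormedAddCommGroup X] [NormedSpace ℝ X]

/-- Weak* closure of a set of functionals on `X`. -/
noncomputable def wscl (S : Set (StrongDual ℝ X)) : Set (StrongDual ℝ X) :=
  StrongDual.toWeakDual ⁻¹' closure (StrongDual.toWeakDual '' S)

/-- `B` is a `U`-bounded set: norm-bounded with positive distance to the complement of `U`. -/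
def UBounded (U B : Set (StrongDual ℝ X)) : Prop :=
  B ⊆ U ∧ Bornology.IsBounded B ∧ ∃ c > 0, ∀ x ∈ B, ∀ y ∉ U, c ≤ dist x y

/-- The envelope `Ũ`: the union of the weak* closures of all `U`-bounded sets. -/
noncomputable def tildeEnv (U : Set (StrongDual ℝ X)) : Set (StrongDual ℝ X) :=
  ⋃ B ∈ {B | UBounded U B}, wscl B

/-- `A⁽¹⁾`: the set of weak* limits of bounded nets from `A`. -/
noncomputable def dOne (A : Set (StrongDual ℝ X)) : Set (StrongDual ℝ X) :=
  ⋃ n : ℕ, wscl (A ∩ ball 0 (n : ℝ))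

open Filter Topology

section Normed

variable {E : Type*} [SeminormedAddCommGroup E] {U : Set E}

theorem image_add_subset_inter_ball {B : Set E} {c R r : ℝ} (hc : ∀ b ∈ B, ∀ w ∉ U, c ≤ dist b w)
    (hR : ∀ b ∈ B, ‖b‖ ≤ R) {v : E} (hv : ‖v‖ < c) (hr : R + ‖v‖ < r) :
    (· + v) '' B ⊆ U ∩ ball 0 r := by
  rintro _ ⟨b, hb, rfl⟩
  refine ⟨?_, ?_⟩
  · by_contra hbv
    have := hc b hb _ hbv
    rw [dist_self_add_right] at this
    linarith
  · rw [mem_ball_zero_iff]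
    linarith [norm_add_le b v, hR b hb]

theorem Convex.ball_smul_add_subset [NormedSpace ℝ E] (hUc : Convex ℝ U) {y z : E} {r s : ℝ}
    (hz : z ∈ U) (hyr : ball y r ⊆ U) (hs0 : 0 < s) (hs1 : s ≤ 1) :
    ball ((1 - s) • z + s • y) (s * r) ⊆ U := by
  intro w hw
  set u := y + s⁻¹ • (w - ((1 - s) • z + s • y))
  have hu : u ∈ ball y r := by
    rw [mem_ball, dist_eq_norm, add_sub_cancel_left, norm_smul, norm_inv,
      Real.norm_of_nonneg hs0.le, inv_mul_lt_iff₀ hs0, ← dist_eq_norm]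
    exact hw
  have hw_eq : (1 - s) • z + s • u = w := by
    rw [smul_add, smul_inv_smul₀ hs0.ne']
    abel
  exact hw_eq ▸ hUc hz (hyr hu) (by linarith) hs0.le (by ring)

end Normed

section WeakStarClosure

variable {S T : Set (StrongDual ℝ X)} {x : StrongDual ℝ X}

theorem wscl_mono (h : S ⊆ T) : wscl S ⊆ wscl T :=
  Set.preimage_mono (closure_mono (Set.image_mono h))

theorem nonempty_of_mem_wscl (hx : x ∈ wscl S) : S.Nonempty := by
  by_contra hS
  rw [Set.not_nonempty_iff_eq_empty.mp hS] at hx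
  simp [wscl] at hx

theorem smul_add_mem_wscl_image (a : ℝ) (c : StrongDual ℝ X) (hx : x ∈ wscl S) :
    a • x + c ∈ wscl ((fun z => a • z + c) '' S) := by
  have hcont : Continuous (fun w : WeakDual ℝ X => a • w + StrongDual.toWeakDual c) :=
    (continuous_id.const_smul a).add continuous_const
  have := mem_closure_image hcont.continuousAt hx
  rw [Set.image_image] at this
  rw [wscl, Set.mem_preimage, Set.image_image]
  exact this

end WeakStarClosure

section Envelope

variable {U : Set (StrongDual ℝ X)}

theorem ball_subset_dOne_of_mem_wscl {B : Set (StrongDual ℝ X)} (hB : Bornology.IsBounded B)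
    {c : ℝ} (hc : ∀ b ∈ B, ∀ w ∉ U, c ≤ dist b w) {x : StrongDual ℝ X} (hx : x ∈ wscl B) :
    ball x c ⊆ dOne U := by
  intro y hy
  rw [mem_ball, dist_eq_norm] at hy
  obtain ⟨R, hR⟩ := hB.exists_norm_le
  obtain ⟨n, hn⟩ := exists_nat_gt (R + ‖y - x‖)
  have hy' := smul_add_mem_wscl_image 1 (y - x) hx
  simp only [one_smul, add_sub_cancel] at hy'
  exact Set.mem_iUnion.mpr ⟨n, wscl_mono (image_add_subset_inter_ball hc hR hy hn) hy'⟩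

theorem tildeEnv_subset_interior_dOne : tildeEnv U ⊆ interior (dOne U) := by
  intro x hx
  simp only [tildeEnv, Set.mem_iUnion] at hx
  obtain ⟨B, ⟨-, hBb, c, hc, hcd⟩, hxB⟩ := hx
  exact interior_mono (ball_subset_dOne_of_mem_wscl hBb hcd hxB)
    (isOpen_ball.subset_interior_iff.mpr subset_rfl (mem_ball_self hc))

theorem uBounded_image_smul_add (hUo : IsOpen U) (hUc : Convex ℝ U) {A : Set (StrongDual ℝ X)}
    (hAU : A ⊆ U) (hA : Bornology.IsBounded A) {y : StrongDual ℝ X} (hy : y ∈ U) {s : ℝ}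
    (hs0 : 0 < s) (hs1 : s ≤ 1) : UBounded U ((fun z => (1 - s) • z + s • y) '' A) := by
  obtain ⟨r, hr0, hyr⟩ := Metric.isOpen_iff.mp hUo y hy
  refine ⟨?_, ?_, s * r, by positivity, ?_⟩
  · rintro _ ⟨z, hz, rfl⟩
    exact hUc (hAU hz) hy (by linarith) hs0.le (by ring)
  · exact ((lipschitzWith_smul (1 - s)).add (LipschitzWith.const (s • y))).isBounded_image hA
  · rintro _ ⟨z, hz, rfl⟩ w hw
    exact le_of_not_gt fun hlt =>
      hw (hUc.ball_smul_add_subset (hAU hz) hyr hs0 hs1 (mem_ball'.mpr hlt))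

theorem interior_dOne_subset_tildeEnv (hUo : IsOpen U) (hUc : Convex ℝ U) :
    interior (dOne U) ⊆ tildeEnv U := by
  intro x hx
  obtain ⟨n₀, hx₀⟩ := Set.mem_iUnion.mp (interior_subset hx)
  obtain ⟨y, hyU, -⟩ := nonempty_of_mem_wscl hx₀
  have hnear : ∀ᶠ t in 𝓝[>] (0 : ℝ), x + t • (x - y) ∈ dOne U := by
    have hlim : Tendsto (fun t : ℝ => x + t • (x - y)) (𝓝 0) (𝓝 x) := by
      simpa using ((continuous_id.smul continuous_const).const_add x).tendsto (0 : ℝ)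
    exact (hlim.mono_left nhdsWithin_le_nhds).eventually (mem_interior_iff_mem_nhds.mp hx)
  obtain ⟨t, hxt, ht⟩ := (hnear.and self_mem_nhdsWithin).exists
  obtain ⟨n, hxn⟩ := Set.mem_iUnion.mp hxt
  have ht1 : 0 < 1 + t := by linarith
  set s := t / (1 + t)
  have hs : s * (1 + t) = t := div_mul_cancel₀ t ht1.ne'
  have hs0 : 0 < s := div_pos ht ht1
  have hs1 : s ≤ 1 := (div_le_one ht1).mpr (by linarith)
  have hcomb : (1 - s) • (x + t • (x - y)) + s • y = x := by
    clear_value s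
    match_scalars
    · linear_combination (-1 : ℝ) * hs
    · linear_combination hs
  have hxB := smul_add_mem_wscl_image (1 - s) (s • y) hxn
  rw [hcomb] at hxB
  have hB := uBounded_image_smul_add (A := U ∩ ball 0 n) hUo hUc Set.inter_subset_left
    (isBounded_ball.subset Set.inter_subset_right) hyU hs0 hs1
  exact Set.mem_biUnion hB hxB

end Envelope

theorem tildeEnv_eq_interior_dOne_general
    (U : Set (StrongDual ℝ X)) (hUo : IsOpen U) (hUc : Convex ℝ U) :
    tildeEnv U = interior (dOne U) :=
  tildeEnv_subset_interior_dOne.antisymm (interior_dOne_subset_tildeEnv hUo hUc)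

/-- For an open convex set `U ⊆ X*`, the envelope `Ũ` equals the norm-interior of
`U⁽¹⁾ = ⋃ₙ w*-cl(U ∩ n B_{X*})`. -/
theorem tildeEnv_eq_interior_dOne [CompleteSpace X]
    (U : Set (StrongDual ℝ X)) (hUo : IsOpen U) (hUc : Convex ℝ U) :
    tildeEnv U = interior (dOne U) :=
  tildeEnv_eq_interior_dOne_general U hUo hUc
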